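/- arXiv:1704.06387 — 2 statements merged into one kernel-verified Lean document; each statement's English description precedes it below -/
import Mathlib

section
/- The anti-automorphism τ of 𝒜 = ℚ⟨e₀, e₁, e_z⟩ given by τ(e₀) = e_z − e₁, τ(e₁) = e_z − e₀, τ(e_z) = e_z maps the subspace 𝒜⁰ = ℚ + ℚe_z + e_z𝒜e_z + e_z𝒜e₀ + e₁𝒜e_z + e₁𝒜e₀ into itself. -/
/-- Generators `e₀, e₁, e_z` of `𝒜 = ℚ⟨e₀,e₁,e_z⟩` (with `e_z = e 2`). -/
noncomputable def e (i : Fin 3) : FreeAlgebra ℚ (Fin 3) := FreeAlgebra.ι ℚ i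

/-- The subspace `𝒜⁰ = ℚ + ℚe_z + e_z𝒜e_z + e_z𝒜e₀ + e₁𝒜e_z + e₁𝒜e₀`. -/
noncomputable def A0 : Submodule ℚ (FreeAlgebra ℚ (Fin 3)) :=
  Submodule.span ℚ
    ({1, e 2} ∪ (Set.range fun w => e 2 * w * e 2) ∪ (Set.range fun w => e 2 * w * e 0)
      ∪ (Set.range fun w => e 1 * w * e 2) ∪ (Set.range fun w => e 1 * w * e 0))

lemma one_mem_A0 : (1 : FreeAlgebra ℚ (Fin 3)) ∈ A0 :=
  Submodule.subset_span (Or.inl (Or.inl (Or.inl (Or.inl (Or.inl rfl)))))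

lemma e2_mem_A0 : e 2 ∈ A0 :=
  Submodule.subset_span (Or.inl (Or.inl (Or.inl (Or.inl (Or.inr rfl)))))

lemma mem22 (w : FreeAlgebra ℚ (Fin 3)) : e 2 * w * e 2 ∈ A0 :=
  Submodule.subset_span (Or.inl (Or.inl (Or.inl (Or.inr ⟨w, rfl⟩))))

lemma mem20 (w : FreeAlgebra ℚ (Fin 3)) : e 2 * w * e 0 ∈ A0 :=
  Submodule.subset_span (Or.inl (Or.inl (Or.inr ⟨w, rfl⟩)))

lemma mem12 (w : FreeAlgebra ℚ (Fin 3)) : e 1 * w * e 2 ∈ A0 :=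
  Submodule.subset_span (Or.inl (Or.inr ⟨w, rfl⟩))

lemma mem10 (w : FreeAlgebra ℚ (Fin 3)) : e 1 * w * e 0 ∈ A0 :=
  Submodule.subset_span (Or.inr ⟨w, rfl⟩)

/-- `τ` maps the subspace `𝒜⁰` into itself. -/
theorem tau_maps_A0 (τ : FreeAlgebra ℚ (Fin 3) →ₗ[ℚ] FreeAlgebra ℚ (Fin 3))
    (hmul : ∀ x y, τ (x * y) = τ y * τ x) (hone : τ 1 = 1)
    (h0 : τ (e 0) = e 2 - e 1) (h1 : τ (e 1) = e 2 - e 0) (h2 : τ (e 2) = e 2) :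
    ∀ x ∈ A0, τ x ∈ A0 := by
  intro x hx
  induction hx using Submodule.span_induction with
  | mem s hs =>
    rcases hs with ((((hs | hs) | ⟨w, rfl⟩) | ⟨w, rfl⟩) | ⟨w, rfl⟩) | ⟨w, rfl⟩
    · subst hs; rw [hone]; exact one_mem_A0
    · subst hs; rw [h2]; exact e2_mem_A0
    · rw [hmul, hmul, h2]
      simp only [← mul_assoc]
      exact mem22 _
    · rw [hmul, hmul, h0, h2]
      simp only [sub_mul, mul_sub, ← mul_assoc]
      exact Submodule.sub_mem _ (mem22 _) (mem12 _)
    · rw [hmul, hmul, h1, h2]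
      simp only [sub_mul, mul_sub, ← mul_assoc]
      exact Submodule.sub_mem _ (mem22 _) (mem20 _)
    · rw [hmul, hmul, h0, h1]
      simp only [sub_mul, mul_sub, ← mul_assoc]
      exact Submodule.sub_mem _ (Submodule.sub_mem _ (mem22 _) (mem12 _))
        (Submodule.sub_mem _ (mem20 _) (mem10 _))
  | zero => simp
  | add a b _ _ ha hb => rw [map_add]; exact Submodule.add_mem _ ha hb
  | smul c a _ ha => rw [map_smul]; exact Submodule.smul_mem _ _ ha
end

section
/- For a₁,…,a_n ∈ {0,1} with a₁ ≠ 0 and a_n ≠ 1, the classical duality formula for iterated integrals holds: I(0;a₁,…,a_n;1) = (−1)ⁿ I(0;1−a_n,…,1−a₁;1). -/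
/-!
Reflecting a point of the simplex `0 < t₁ < ⋯ < t_n < 1` through `tᵢ ↦ 1 - t_{n+1-i}` maps the
simplex onto itself and preserves Lebesgue measure. It turns each factor `1/(tᵢ - aᵢ)` of the
integrand into `-1/(t_{n+1-i} - (1 - aᵢ))`, so the change of variables produces the sign `(-1)ⁿ`
and the reversed, complemented word.
-/

open MeasureTheory

/-- The iterated integral `I(0;a₁,…,a_n;1)` over the simplex `0 < t₁ < ⋯ < t_n < 1`. -/
noncomputable def II (a : List ℂ) : ℂ :=
  ∫ t in {t : Fin a.length → ℝ | (∀ i, t i ∈ Set.Ioo (0:ℝ) 1) ∧ StrictMono t},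
    ∏ i, ((t i : ℂ) - a.get i)⁻¹

def orderedSimplex (n : ℕ) : Set (Fin n → ℝ) :=
  {t | (∀ i, t i ∈ Set.Ioo (0:ℝ) 1) ∧ StrictMono t}

noncomputable def iteratedIntegral (n : ℕ) (b : Fin n → ℂ) : ℂ :=
  ∫ t in orderedSimplex n, ∏ i, ((t i : ℂ) - b i)⁻¹

theorem II_eq_iteratedIntegral {l : List ℂ} {n : ℕ} (hlen : l.length = n) {b : Fin n → ℂ}
    (hb : ∀ i : Fin n, l[i] = b i) : II l = iteratedIntegral n b := by
  subst hlen
  exact congrArg (iteratedIntegral l.length) (funext hb)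

noncomputable def simplexReflection (n : ℕ) : (Fin n → ℝ) ≃ᵐ (Fin n → ℝ) :=
  MeasurableEquiv.arrowCongr' Fin.revPerm (MeasurableEquiv.subLeft 1)

section Reflection

variable {n : ℕ}

theorem simplexReflection_apply (t : Fin n → ℝ) (i : Fin n) :
    simplexReflection n t i = 1 - t i.rev :=
  rfl

theorem simplexReflection_involutive : Function.Involutive (simplexReflection n) := by
  intro t
  funext i
  simp [simplexReflection_apply]

theorem measurePreserving_simplexReflection : MeasurePreserving (simplexReflection n) :=
  volume_preserving_arrowCongr' _ _ (Measure.measurePreserving_sub_left volume 1)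

theorem simplexReflection_mem_orderedSimplex {t : Fin n → ℝ} (ht : t ∈ orderedSimplex n) :
    simplexReflection n t ∈ orderedSimplex n := by
  obtain ⟨hIoo, hmono⟩ := ht
  refine ⟨fun i => ?_, fun i j hij => ?_⟩
  · obtain ⟨h0, h1⟩ := hIoo i.rev
    rw [simplexReflection_apply]
    constructor <;> linarith
  · have := hmono (Fin.rev_lt_rev.mpr hij)
    simp only [simplexReflection_apply]
    linarith

theorem preimage_simplexReflection_orderedSimplex :
    simplexReflection n ⁻¹' orderedSimplex n = orderedSimplex n := by
  refine Set.Subset.antisymm (fun t ht => ?_) (fun t ht => simplexReflection_mem_orderedSimplex ht)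
  rw [← simplexReflection_involutive t]
  exact simplexReflection_mem_orderedSimplex ht

theorem setIntegral_orderedSimplex_comp_simplexReflection {E : Type*} [NormedAddCommGroup E]
    [NormedSpace ℝ E] (f : (Fin n → ℝ) → E) :
    ∫ t in orderedSimplex n, f (simplexReflection n t) = ∫ t in orderedSimplex n, f t := by
  conv_lhs => rw [← preimage_simplexReflection_orderedSimplex]
  exact measurePreserving_simplexReflection.setIntegral_preimage_emb
    (simplexReflection n).measurableEmbedding f _

theorem prod_inv_sub_simplexReflection (b : Fin n → ℂ) (t : Fin n → ℝ) :
    ∏ i, ((simplexReflection n t i : ℂ) - b i)⁻¹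
      = (-1) ^ n * ∏ i, ((t i : ℂ) - (1 - b i.rev))⁻¹ := by
  have hfactor : ∀ i, ((simplexReflection n t i : ℂ) - b i)⁻¹
      = -((t i.rev : ℂ) - (1 - b i.rev.rev))⁻¹ := by
    intro i
    rw [simplexReflection_apply, Fin.rev_rev, ← inv_neg]
    push_cast
    ring
  simp_rw [hfactor, Finset.prod_neg, Finset.card_univ, Fintype.card_fin]
  congr 1
  exact Equiv.prod_comp Fin.revPerm fun i => ((t i : ℂ) - (1 - b i.rev))⁻¹

theorem iteratedIntegral_eq_neg_one_pow_mul_dual (b : Fin n → ℂ) :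
    iteratedIntegral n b = (-1) ^ n * iteratedIntegral n (fun i => 1 - b i.rev) := by
  rw [iteratedIntegral, ← setIntegral_orderedSimplex_comp_simplexReflection]
  simp_rw [prod_inv_sub_simplexReflection]
  exact integral_const_mul _ _

end Reflection

theorem classical_duality_general (l : List ℂ) :
    II l = (-1 : ℂ) ^ l.length * II ((l.map (fun a => 1 - a)).reverse) := by
  have hdual : II ((l.map (fun a => 1 - a)).reverse)
      = iteratedIntegral l.length (fun i => 1 - l[i.rev]) := by
    refine II_eq_iteratedIntegral (by simp) fun i => ?_
    simp only [Fin.getElem_fin, List.getElem_reverse, List.getElem_map, List.length_map,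
      Fin.val_rev]
    congr 2
    omega
  rw [hdual, II_eq_iteratedIntegral rfl fun _ => rfl]
  exact iteratedIntegral_eq_neg_one_pow_mul_dual _

/-- Classical duality: for letters in `{0,1}` with `a₁ = 1` and `a_n = 0`,
`I(0;a₁,…,a_n;1) = (−1)ⁿ I(0;1−a_n,…,1−a₁;1)`. -/
theorem classical_duality (l : List ℂ) (hne : l ≠ [])
    (hmem : ∀ a ∈ l, a = 0 ∨ a = 1)
    (hhead : l.head? = some 1) (hlast : l.getLast? = some 0) :
    II l = (-1 : ℂ) ^ l.length * II ((l.map (fun a => 1 - a)).reverse) :=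
  classical_duality_general l
end
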